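/- arXiv:2312.04183 — 3 statements merged into one kernel-verified Lean document; each statement's English description precedes it below -/
import Mathlib

section
/- Let μ₁, μ₂ ∈ ℝ and let X and Y be independent real random variables with X distributed according to the Gaussian measure with mean μ₁ and variance 1/2 and Y distributed according to the Gaussian measure with mean μ₂ and variance 1/2. Then E[ X · sgn(Y) ] = μ₁ · Φ(μ₂). -/
/-!
By independence `E[X · sgn Y] = E[X] · E[sgn Y]`, and `E[X] = μ₁`. For any law, `E[sgn Y]` is
`P(Y > 0) - P(Y < 0)`; centring `Y` and reflecting its lower tail turns this into the mass that
`N(0, 1/2)` gives to `[-μ₂, μ₂]`. Since `N(0, 1/2)` has the even density `exp(-t²)/√π`, that mass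
is `(2/√π) ∫₀^μ₂ exp(-t²) dt = Φ(μ₂)`.
-/

open MeasureTheory ProbabilityTheory
open scoped NNReal

/-- The error function `Φ(x) = (2/√π) ∫₀ˣ exp(−t²) dt`. -/
noncomputable def erf (x : ℝ) : ℝ :=
  2 / Real.sqrt Real.pi * ∫ t in (0 : ℝ)..x, Real.exp (-t ^ 2)

open Set

lemma Real.sign_eq_indicator_Ioi_sub_indicator_Iio (y : ℝ) :
    Real.sign y = (Ioi 0).indicator 1 y - (Iio 0).indicator 1 y := by
  rcases lt_trichotomy y 0 with hy | rfl | hy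
  · simp [Real.sign_of_neg hy, hy, hy.not_gt]
  · simp
  · simp [Real.sign_of_pos hy, hy, hy.not_gt]

lemma integral_sign_eq_measureReal_Ioi_sub_Iio (ν : Measure ℝ) [IsFiniteMeasure ν] :
    ∫ y, Real.sign y ∂ν = ν.real (Ioi 0) - ν.real (Iio 0) := by
  simp_rw [Real.sign_eq_indicator_Ioi_sub_indicator_Iio]
  rw [integral_sub ((integrable_const 1).indicator measurableSet_Ioi)
      ((integrable_const 1).indicator measurableSet_Iio),
    integral_indicator_one measurableSet_Ioi, integral_indicator_one measurableSet_Iio]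

lemma measureReal_gaussianReal_Ioi (μ a : ℝ) (v : ℝ≥0) :
    (gaussianReal μ v).real (Ioi a) = (gaussianReal 0 v).real (Ioi (a - μ)) := by
  rw [← zero_add μ, ← gaussianReal_map_add_const,
    map_measureReal_apply (measurable_add_const μ) measurableSet_Ioi, preimage_add_const_Ioi,
    zero_add]

lemma measureReal_gaussianReal_Iio (μ a : ℝ) (v : ℝ≥0) :
    (gaussianReal μ v).real (Iio a) = (gaussianReal 0 v).real (Ioi (μ - a)) := by
  rw [← neg_neg μ, ← gaussianReal_map_neg,
    map_measureReal_apply measurable_neg measurableSet_Iio, neg_preimage, neg_Iio,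
    measureReal_gaussianReal_Ioi, neg_neg, sub_neg_eq_add, add_comm, ← sub_eq_add_neg]

lemma measureReal_gaussianReal_eq_setIntegral (μ : ℝ) {v : ℝ≥0} (hv : v ≠ 0) (s : Set ℝ) :
    (gaussianReal μ v).real s = ∫ x in s, gaussianPDFReal μ v x := by
  rw [measureReal_def, gaussianReal_apply_eq_integral μ hv,
    ENNReal.toReal_ofReal (integral_nonneg (gaussianPDFReal_nonneg μ v))]

lemma integral_sign_gaussianReal (μ : ℝ) {v : ℝ≥0} (hv : v ≠ 0) :
    ∫ y, Real.sign y ∂gaussianReal μ v = ∫ x in -μ..μ, gaussianPDFReal 0 v x := by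
  have hint : ∀ a, IntegrableOn (gaussianPDFReal 0 v) (Ioi a) :=
    fun a ↦ (integrable_gaussianPDFReal 0 v).integrableOn
  rw [integral_sign_eq_measureReal_Ioi_sub_Iio, measureReal_gaussianReal_Ioi,
    measureReal_gaussianReal_Iio, measureReal_gaussianReal_eq_setIntegral 0 hv,
    measureReal_gaussianReal_eq_setIntegral 0 hv,
    intervalIntegral.integral_Ioi_sub_Ioi' (hint _) (hint _), zero_sub, sub_zero]

lemma intervalIntegral.integral_neg_self_eq_two_smul_of_even {E : Type*} [NormedAddCommGroup E]
    [NormedSpace ℝ E] {f : ℝ → E} (hf : ∀ x, f (-x) = f x) {a : ℝ}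
    (hfa : IntervalIntegrable f volume 0 a) :
    ∫ x in -a..a, f x = (2 : ℝ) • ∫ x in 0..a, f x := by
  have hleft : ∫ x in -a..0, f x = ∫ x in 0..a, f x := by
    simpa [hf] using intervalIntegral.integral_comp_neg (a := -a) (b := 0) f
  have hfa' : IntervalIntegrable f volume (-a) 0 := by
    simpa [hf] using ((IntervalIntegrable.iff_comp_neg).mp hfa).symm
  rw [← intervalIntegral.integral_add_adjacent_intervals hfa' hfa, hleft, two_smul]

lemma gaussianPDFReal_zero_half (x : ℝ) :
    gaussianPDFReal 0 (1 / 2) x = Real.exp (-x ^ 2) / Real.sqrt Real.pi := by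
  rw [gaussianPDFReal]
  norm_num
  field_simp

lemma erf_eq_intervalIntegral_gaussianPDFReal (x : ℝ) :
    erf x = ∫ t in -x..x, gaussianPDFReal 0 (1 / 2) t := by
  simp_rw [gaussianPDFReal_zero_half]
  have hcont : Continuous fun t : ℝ ↦ Real.exp (-t ^ 2) / Real.sqrt Real.pi := by fun_prop
  rw [intervalIntegral.integral_neg_self_eq_two_smul_of_even (by simp)
    (hcont.intervalIntegrable _ _), intervalIntegral.integral_div, erf]
  ring

/-- If `X ~ N(μ₁, 1/2)` and `Y ~ N(μ₂, 1/2)` are independent, then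
`E[X · sgn Y] = μ₁ · Φ(μ₂)`. -/
theorem expectation_self_mul_sign_indep_gaussian (μ₁ μ₂ : ℝ) :
    ∫ p : ℝ × ℝ, p.1 * Real.sign p.2
        ∂((gaussianReal μ₁ (1 / 2)).prod (gaussianReal μ₂ (1 / 2))) =
      μ₁ * erf μ₂ := by
  rw [integral_prod_mul (fun x : ℝ ↦ x) Real.sign, integral_id_gaussianReal,
    integral_sign_gaussianReal μ₂ (by norm_num), erf_eq_intervalIntegral_gaussianPDFReal]
end

section
/- Let μ₁, μ₂ ∈ ℂ and let z₁ and z₂ be independent complex random variables such that, for i = 1, 2, Re(z_i) and Im(z_i) are independent real Gaussian random variables with means Re(μ_i) and Im(μ_i) respectively and common variance 1/2. Then E[ csgn(z₁) · conj(csgn(z₂)) ] = ( Φ(Re μ₁) + i·Φ(Im μ₁) ) · ( Φ(Re μ₂) − i·Φ(Im μ₂) ). -/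
open MeasureTheory ProbabilityTheory
open scoped NNReal

/-- The complex sign map `csgn(z) = sgn(Re z) + i sgn(Im z)`. -/
noncomputable def csgn (z : ℂ) : ℂ :=
  (Real.sign z.re : ℂ) + (Real.sign z.im : ℂ) * Complex.I

/-- The law of a complex random variable whose real and imaginary parts are
independent real Gaussians with means `Re μ`, `Im μ` and common variance `1/2`. -/
noncomputable def complexGaussian (μ : ℂ) : Measure ℂ :=
  ((gaussianReal μ.re (1 / 2)).prod (gaussianReal μ.im (1 / 2))).map
    fun p => (p.1 : ℂ) + (p.2 : ℂ) * Complex.I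

open Set
open scoped ENNReal Real

lemma measurable_realSign : Measurable Real.sign := by
  unfold Real.sign
  exact Measurable.ite (measurableSet_lt measurable_id measurable_const) measurable_const
    (Measurable.ite (measurableSet_lt measurable_const measurable_id) measurable_const
      measurable_const)

lemma abs_realSign_le_one (r : ℝ) : |Real.sign r| ≤ 1 := by
  rcases Real.sign_apply_eq r with h | h | h <;> rw [h] <;> norm_num

lemma integral_sign_gaussian (m : ℝ) :
    ∫ x, Real.sign x ∂(gaussianReal m (1 / 2)) = erf m := by
  have hv : ((1 : ℝ≥0) / 2) ≠ 0 := by norm_num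
  rw [gaussianReal_of_var_ne_zero m hv]
  set g : ℝ → ℝ := fun x => Real.exp (-(x - m) ^ 2) with hg
  have hpdf : ∀ x, gaussianPDFReal m (1 / 2) x = (Real.sqrt Real.pi)⁻¹ * g x := by
    intro x
    have h2 : Real.sqrt 2 ≠ 0 := by positivity
    have hπ : Real.sqrt Real.pi ≠ 0 := by positivity
    simp only [gaussianPDFReal, hg]
    norm_num
    field_simp
  have hInt : Integrable g := by
    have := (integrable_exp_neg_mul_sq (one_pos)).comp_sub_right m
    simpa [hg] using this
  -- step 1 : withDensity to density integral
  have h1 : ∫ x, Real.sign x ∂(volume.withDensity (gaussianPDF m (1/2)))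
      = ∫ x, gaussianPDFReal m (1/2) x * Real.sign x := by
    rw [gaussianPDF_def]
    have heq : (fun x => ENNReal.ofReal (gaussianPDFReal m (1/2) x))
        = fun x => ((gaussianPDFReal m (1/2) x).toNNReal : ℝ≥0∞) := rfl
    rw [heq, integral_withDensity_eq_integral_smul
      ((measurable_gaussianPDFReal m (1/2)).real_toNNReal) Real.sign]
    congr 1
    ext x
    simp only [NNReal.smul_def, smul_eq_mul]
    rw [Real.coe_toNNReal _ (gaussianPDFReal_nonneg m (1/2) x)]
  rw [h1]
  simp_rw [hpdf, mul_assoc]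
  rw [integral_const_mul]
  -- now compute S = ∫ g x * sign x
  have hIntS : Integrable (fun x => g x * Real.sign x) := by
    refine hInt.mono' ((hInt.1.aemeasurable.mul
      (measurable_realSign.comp measurable_id).aemeasurable).aestronglyMeasurable) ?_
    filter_upwards with x
    rw [norm_mul, Real.norm_eq_abs, Real.norm_eq_abs, abs_of_pos (Real.exp_pos _)]
    nlinarith [abs_realSign_le_one x, Real.exp_pos (-(x - m) ^ 2), abs_nonneg (Real.sign x)]
  -- split the integral
  have hsplit : (∫ x, g x * Real.sign x)
      = (∫ x in Iic (0:ℝ), g x * Real.sign x) + ∫ x in Ioi (0:ℝ), g x * Real.sign x :=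
    (intervalIntegral.integral_Iic_add_Ioi hIntS.integrableOn hIntS.integrableOn).symm
  have hneg : (∫ x in Iic (0:ℝ), g x * Real.sign x) = - ∫ x in Iic (0:ℝ), g x := by
    rw [← restrict_Iio_eq_restrict_Iic, ← integral_neg]
    refine setIntegral_congr_fun measurableSet_Iio fun x hx => ?_
    rw [Real.sign_of_neg hx, mul_neg_one]
  have hpos : (∫ x in Ioi (0:ℝ), g x * Real.sign x) = ∫ x in Ioi (0:ℝ), g x := by
    refine setIntegral_congr_fun measurableSet_Ioi fun x hx => ?_
    rw [Real.sign_of_pos hx, mul_one]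
  rw [hsplit, hneg, hpos]
  -- ∫_{Ioi 0} g = ∫ g - ∫_{Iic 0} g
  have htot : (∫ x in Iic (0:ℝ), g x) + (∫ x in Ioi (0:ℝ), g x) = ∫ x, g x :=
    intervalIntegral.integral_Iic_add_Ioi hInt.integrableOn hInt.integrableOn
  have hgauss : (∫ x, g x) = Real.sqrt Real.pi := by
    have h0 : (∫ x : ℝ, Real.exp (-(1:ℝ) * x ^ 2)) = Real.sqrt (Real.pi / 1) :=
      integral_gaussian 1
    have h1 := integral_sub_right_eq_self (μ := volume)
      (fun x => Real.exp (-(1:ℝ) * x ^ 2)) m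
    rw [hg]
    simp only [neg_mul, one_mul] at h0 h1 ⊢
    rw [h1, h0]
    norm_num
  -- compute ∫_{Iic 0} g via shift
  have hshift : (∫ x in Iic (0:ℝ), g x)
      = ∫ x in Iic (-m), Real.exp (-x ^ 2) := by
    have hme : MeasurableEmbedding (fun x : ℝ => x + m) :=
      (MeasurableEquiv.addRight m).measurableEmbedding
    have := hme.setIntegral_map (μ := volume) g (Iic (0:ℝ))
    rw [map_add_right_eq_self volume m] at this
    rw [this]
    have hpre : (fun x : ℝ => x + m) ⁻¹' Iic (0:ℝ) = Iic (-m) := by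
      ext x
      simp only [Set.mem_preimage, Set.mem_Iic]
      constructor <;> intro h <;> linarith
    rw [hpre]
    refine setIntegral_congr_fun measurableSet_Iic fun x _ => ?_
    simp [hg]
  have hIic0 : (∫ x in Iic (0:ℝ), Real.exp (-x ^ 2)) = Real.sqrt Real.pi / 2 := by
    have h1 : (∫ x in Iic (0:ℝ), Real.exp (-x ^ 2))
        = ∫ x in Ioi (0:ℝ), Real.exp (-x ^ 2) := by
      rw [show (Ioi (0:ℝ)) = Ioi (-(0:ℝ)) by norm_num, ← integral_comp_neg_Iic]
      refine setIntegral_congr_fun measurableSet_Iic fun x _ => by ring_nf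
    rw [h1]
    have := integral_gaussian_Ioi 1
    simpa using this
  have hIicm : (∫ x in Iic (-m), Real.exp (-x ^ 2))
      = Real.sqrt Real.pi / 2 - ∫ t in (0:ℝ)..m, Real.exp (-t ^ 2) := by
    have hi : Integrable (fun x : ℝ => Real.exp (-x ^ 2)) := by
      simpa using integrable_exp_neg_mul_sq (one_pos)
    have := intervalIntegral.integral_Iic_sub_Iic (a := (0:ℝ)) (b := -m)
      hi.integrableOn hi.integrableOn
    rw [hIic0] at this
    have hsym : (∫ t in (0:ℝ)..(-m), Real.exp (-t ^ 2))
        = - ∫ t in (0:ℝ)..m, Real.exp (-t ^ 2) := by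
      have := intervalIntegral.integral_comp_neg (a := (0:ℝ)) (b := -m)
        (fun t => Real.exp (-t ^ 2))
      simp only [neg_neg, neg_zero] at this
      rw [show (fun t : ℝ => Real.exp (-(-t) ^ 2)) = fun t : ℝ => Real.exp (-t ^ 2) by
        ext t; ring_nf] at this
      rw [this]
      exact intervalIntegral.integral_symm 0 m
    linarith [this, hsym]
  rw [hshift, hIicm]
  have : (∫ x in Ioi (0:ℝ), g x) = Real.sqrt Real.pi - ∫ x in Iic (0:ℝ), g x := by
    linarith [htot]
  rw [this, hshift, hIicm, erf]
  have hπ : Real.sqrt Real.pi ≠ 0 := by positivity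
  field_simp
  ring

lemma measurable_csgn : Measurable csgn := by
  unfold csgn
  exact ((Complex.measurable_ofReal.comp
        (measurable_realSign.comp Complex.measurable_re)).add
    ((Complex.measurable_ofReal.comp
        (measurable_realSign.comp Complex.measurable_im)).mul_const Complex.I))

lemma measurable_mk : Measurable (fun p : ℝ × ℝ => (p.1 : ℂ) + (p.2 : ℂ) * Complex.I) :=
  (Complex.measurable_ofReal.comp measurable_fst).add
    ((Complex.measurable_ofReal.comp measurable_snd).mul_const Complex.I)

instance (μ : ℂ) : IsProbabilityMeasure (complexGaussian μ) :=
  Measure.isProbabilityMeasure_map measurable_mk.aemeasurable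

lemma integral_sign_fst (μ ν : Measure ℝ) [IsProbabilityMeasure μ] [IsProbabilityMeasure ν] :
    ∫ p : ℝ × ℝ, Real.sign p.1 ∂(μ.prod ν) = ∫ x, Real.sign x ∂μ := by
  have := integral_prod_mul (μ := μ) (ν := ν) Real.sign (fun _ => (1 : ℝ))
  simpa using this

lemma integral_sign_snd (μ ν : Measure ℝ) [IsProbabilityMeasure μ] [IsProbabilityMeasure ν] :
    ∫ p : ℝ × ℝ, Real.sign p.2 ∂(μ.prod ν) = ∫ x, Real.sign x ∂ν := by
  have := integral_prod_mul (μ := μ) (ν := ν) (fun _ => (1 : ℝ)) Real.sign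
  simpa using this

lemma integrable_sign_fst (μ ν : Measure ℝ) [IsProbabilityMeasure μ] [IsProbabilityMeasure ν] :
    Integrable (fun p : ℝ × ℝ => Real.sign p.1) (μ.prod ν) := by
  refine Integrable.mono' (integrable_const 1)
    ((measurable_realSign.comp measurable_fst).aestronglyMeasurable) ?_
  filter_upwards with p
  rw [Real.norm_eq_abs]
  exact abs_realSign_le_one _

lemma integrable_sign_snd (μ ν : Measure ℝ) [IsProbabilityMeasure μ] [IsProbabilityMeasure ν] :
    Integrable (fun p : ℝ × ℝ => Real.sign p.2) (μ.prod ν) := by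
  refine Integrable.mono' (integrable_const 1)
    ((measurable_realSign.comp measurable_snd).aestronglyMeasurable) ?_
  filter_upwards with p
  rw [Real.norm_eq_abs]
  exact abs_realSign_le_one _

lemma integral_csgn (μ : ℂ) :
    ∫ z, csgn z ∂(complexGaussian μ) = (erf μ.re : ℂ) + (erf μ.im : ℂ) * Complex.I := by
  rw [complexGaussian, integral_map measurable_mk.aemeasurable
    measurable_csgn.aestronglyMeasurable]
  have hcs : ∀ p : ℝ × ℝ, csgn ((p.1 : ℂ) + (p.2 : ℂ) * Complex.I)
      = (Real.sign p.1 : ℂ) + (Real.sign p.2 : ℂ) * Complex.I := by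
    intro p
    simp [csgn]
  simp_rw [hcs]
  set P := (gaussianReal μ.re (1 / 2)).prod (gaussianReal μ.im (1 / 2)) with hP
  have h1 : Integrable (fun p : ℝ × ℝ => ((Real.sign p.1 : ℝ) : ℂ)) P :=
    (integrable_sign_fst _ _).ofReal
  have h2 : Integrable (fun p : ℝ × ℝ => ((Real.sign p.2 : ℝ) : ℂ) * Complex.I) P :=
    ((integrable_sign_snd _ _).ofReal).mul_const Complex.I
  have e1 : (∫ a : ℝ × ℝ, ((Real.sign a.1 : ℝ) : ℂ) ∂P)
      = ((∫ a : ℝ × ℝ, Real.sign a.1 ∂P : ℝ) : ℂ) := integral_ofReal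
  have e2 : (∫ a : ℝ × ℝ, ((Real.sign a.2 : ℝ) : ℂ) ∂P)
      = ((∫ a : ℝ × ℝ, Real.sign a.2 ∂P : ℝ) : ℂ) := integral_ofReal
  rw [integral_add h1 h2, integral_mul_const, e1, e2, hP,
    integral_sign_fst, integral_sign_snd, integral_sign_gaussian, integral_sign_gaussian]

/-- For independent `z₁, z₂` as above,
`E[csgn z₁ · conj(csgn z₂)] = (Φ(Re μ₁) + iΦ(Im μ₁))(Φ(Re μ₂) − iΦ(Im μ₂))`. -/
theorem expectation_csgn_mul_conj_csgn_indep (μ₁ μ₂ : ℂ) :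
    ∫ z : ℂ × ℂ, csgn z.1 * (starRingEnd ℂ) (csgn z.2)
        ∂((complexGaussian μ₁).prod (complexGaussian μ₂)) =
      ((erf μ₁.re : ℂ) + (erf μ₁.im : ℂ) * Complex.I) *
        ((erf μ₂.re : ℂ) - (erf μ₂.im : ℂ) * Complex.I) := by
  rw [integral_prod_mul csgn (fun z => (starRingEnd ℂ) (csgn z)), integral_csgn]
  congr 1
  rw [integral_conj, integral_csgn]
  simp [Complex.ext_iff]
end

section
/- Let μ ∈ ℂ and let z be a complex random variable such that Re(z) and Im(z) are independent real Gaussian random variables with means Re(μ) and Im(μ) respectively and common variance 1/2. Then E[ z · conj(csgn(z)) ] = (1/√π)·( exp(−(Re μ)²) + exp(−(Im μ)²) ) + (Re μ)·Φ(Re μ) + (Im μ)·Φ(Im μ) + i·( (Im μ)·Φ(Re μ) − (Re μ)·Φ(Im μ) ). -/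
open MeasureTheory ProbabilityTheory
open scoped NNReal

namespace CsgnAux

open Real Set Filter Topology
open scoped ENNReal

lemma measurable_sign : Measurable Real.sign := by
  have h : Real.sign = fun r : ℝ => if r < 0 then (-1 : ℝ) else if 0 < r then 1 else 0 := by
    funext r; rfl
  rw [h]
  exact Measurable.ite (measurableSet_lt measurable_id measurable_const) measurable_const
    (Measurable.ite (measurableSet_lt measurable_const measurable_id) measurable_const
      measurable_const)

lemma abs_sign_le (x : ℝ) : |Real.sign x| ≤ 1 := by
  rcases Real.sign_apply_eq x with h | h | h <;> simp [h]

/-- `E y = ∫_0^y e^{-t²} dt` -/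
noncomputable def E (y : ℝ) : ℝ := ∫ t in (0 : ℝ)..y, Real.exp (-t ^ 2)

lemma erf_eq (m : ℝ) : erf m = 2 / Real.sqrt π * E m := rfl

lemma cont_exp_neg_sq : Continuous fun t : ℝ => Real.exp (-t ^ 2) := by fun_prop

lemma hasDerivAt_E (y : ℝ) : HasDerivAt E (Real.exp (-y ^ 2)) y :=
  (cont_exp_neg_sq.integral_hasStrictDerivAt 0 y).hasDerivAt

lemma E_neg (y : ℝ) : E (-y) = -E y := by
  have h := intervalIntegral.integral_comp_neg (a := y) (b := 0)
    (fun t : ℝ => Real.exp (-t ^ 2))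
  simp only [neg_zero] at h
  have h2 : (∫ x in y..(0:ℝ), Real.exp (-(-x) ^ 2)) = ∫ x in y..(0:ℝ), Real.exp (-x ^ 2) := by
    simp [neg_pow]
  rw [h2] at h
  unfold E
  rw [← h, intervalIntegral.integral_symm]

lemma int_exp : Integrable fun x : ℝ => Real.exp (-x ^ 2) := by
  have := integrable_exp_neg_mul_sq (b := 1) one_pos
  simpa using this

lemma Ioi_exp_sq : ∫ x in Ioi (0:ℝ), Real.exp (-x ^ 2) = Real.sqrt π / 2 := by
  have := integral_gaussian_Ioi 1
  simpa using this

lemma Iic_exp_sq : ∫ x in Iic (0:ℝ), Real.exp (-x ^ 2) = Real.sqrt π / 2 := by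
  have htot : (∫ x : ℝ, Real.exp (-x ^ 2)) = Real.sqrt π := by
    have := integral_gaussian 1
    simpa using this
  have hsplit := intervalIntegral.integral_Iic_add_Ioi (b := (0:ℝ)) (μ := volume)
    (int_exp.integrableOn) (int_exp.integrableOn)
  rw [Ioi_exp_sq, htot] at hsplit
  linarith

lemma E_top : Tendsto E atTop (𝓝 (Real.sqrt π / 2)) := by
  rw [← Ioi_exp_sq]
  exact intervalIntegral_tendsto_integral_Ioi 0 int_exp.integrableOn tendsto_id

lemma E_bot : Tendsto E atBot (𝓝 (-(Real.sqrt π / 2))) := by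
  have h := intervalIntegral_tendsto_integral_Iic 0 (int_exp.integrableOn (s := Iic 0)) tendsto_id
  rw [Iic_exp_sq] at h
  have : E = fun y => -∫ t in y..(0:ℝ), Real.exp (-t ^ 2) := by
    funext y; rw [intervalIntegral.integral_symm, neg_neg]; rfl
  rw [this]
  exact h.neg

variable (m : ℝ)

lemma sub_top : Tendsto (fun x : ℝ => x - m) atTop atTop :=
  tendsto_atTop_add_const_right _ (-m) tendsto_id

lemma sub_bot : Tendsto (fun x : ℝ => x - m) atBot atBot :=
  tendsto_atBot_add_const_right _ (-m) tendsto_id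

lemma sq_sub_top : Tendsto (fun x : ℝ => (x - m) ^ 2) atTop atTop := by
  have h := (tendsto_pow_atTop (n := 2) two_ne_zero).comp
    (tendsto_abs_atTop_atTop.comp (sub_top m))
  simpa [Function.comp_def, sq_abs] using h

lemma sq_sub_bot : Tendsto (fun x : ℝ => (x - m) ^ 2) atBot atTop := by
  have h := (tendsto_pow_atTop (n := 2) two_ne_zero).comp
    (tendsto_abs_atBot_atTop.comp (sub_bot m))
  simpa [Function.comp_def, sq_abs] using h

lemma exp_sub_top : Tendsto (fun x : ℝ => Real.exp (-(x - m) ^ 2)) atTop (𝓝 0) :=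
  Real.tendsto_exp_atBot.comp ((tendsto_neg_atTop_atBot).comp (sq_sub_top m))

lemma exp_sub_bot : Tendsto (fun x : ℝ => Real.exp (-(x - m) ^ 2)) atBot (𝓝 0) :=
  Real.tendsto_exp_atBot.comp ((tendsto_neg_atTop_atBot).comp (sq_sub_bot m))

lemma E_sub_top : Tendsto (fun x : ℝ => E (x - m)) atTop (𝓝 (Real.sqrt π / 2)) :=
  E_top.comp (sub_top m)

lemma E_sub_bot : Tendsto (fun x : ℝ => E (x - m)) atBot (𝓝 (-(Real.sqrt π / 2))) :=
  E_bot.comp (sub_bot m)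

lemma hasDerivAt_E_sub (x : ℝ) :
    HasDerivAt (fun x : ℝ => E (x - m)) (Real.exp (-(x - m) ^ 2)) x := by
  have h := (hasDerivAt_E (x - m)).comp x ((hasDerivAt_id x).sub_const m)
  exact h.congr_deriv (by simp)

lemma hasDerivAt_negexp (u : ℝ) :
    HasDerivAt (fun u : ℝ => -(Real.exp (-u ^ 2) / 2)) (u * Real.exp (-u ^ 2)) u := by
  have h1 : HasDerivAt (fun u : ℝ => -u ^ 2) (-(2 * u)) u := by
    simpa [Pi.neg_def] using (hasDerivAt_pow 2 u).neg
  have h2 := ((h1.exp).div_const 2).neg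
  exact h2.congr_deriv (by ring)

lemma hasDerivAt_negexp_sub (x : ℝ) :
    HasDerivAt (fun x : ℝ => -(Real.exp (-(x - m) ^ 2) / 2))
      ((x - m) * Real.exp (-(x - m) ^ 2)) x := by
  have h := (hasDerivAt_negexp (x - m)).comp x ((hasDerivAt_id x).sub_const m)
  exact h.congr_deriv (by simp)

lemma int_exp_sub : Integrable fun x : ℝ => Real.exp (-(x - m) ^ 2) :=
  int_exp.comp_sub_right m

lemma int_xexp : Integrable fun x : ℝ => x * Real.exp (-x ^ 2) := by
  have := integrable_mul_exp_neg_mul_sq (b := 1) one_pos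
  simpa using this

lemma int_xexp_sub : Integrable fun x : ℝ => x * Real.exp (-(x - m) ^ 2) := by
  have h1 : Integrable fun x : ℝ => (x - m) * Real.exp (-(x - m) ^ 2) :=
    (int_xexp).comp_sub_right m
  have h2 : Integrable fun x : ℝ => m * Real.exp (-(x - m) ^ 2) :=
    (int_exp_sub m).const_mul m
  have h := h1.add h2
  have he : (fun x : ℝ => x * Real.exp (-(x - m) ^ 2)) =
      fun x => (x - m) * Real.exp (-(x - m) ^ 2) + m * Real.exp (-(x - m) ^ 2) := by
    funext x; ring
  rw [he]; exact h

lemma L1 : ∫ x in Ioi (0:ℝ), Real.exp (-(x - m) ^ 2) = Real.sqrt π / 2 + E m := by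
  have h := integral_Ioi_of_hasDerivAt_of_tendsto (a := (0:ℝ))
    (f := fun x => E (x - m)) (f' := fun x => Real.exp (-(x - m) ^ 2))
    (hasDerivAt_E_sub m 0).continuousAt.continuousWithinAt
    (fun x _ => hasDerivAt_E_sub m x)
    ((int_exp_sub m).integrableOn)
    (E_sub_top m)
  rw [h]
  simp [E_neg]

lemma L2 : ∫ x in Iio (0:ℝ), Real.exp (-(x - m) ^ 2) = Real.sqrt π / 2 - E m := by
  have h := integral_Iic_of_hasDerivAt_of_tendsto (a := (0:ℝ))
    (f := fun x => E (x - m)) (f' := fun x => Real.exp (-(x - m) ^ 2))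
    (hasDerivAt_E_sub m 0).continuousAt.continuousWithinAt
    (fun x _ => hasDerivAt_E_sub m x)
    ((int_exp_sub m).integrableOn)
    (E_sub_bot m)
  rw [← integral_Iic_eq_integral_Iio, h]
  simp [E_neg]
  ring

lemma hasDerivAt_F (x : ℝ) :
    HasDerivAt (fun x : ℝ => -(Real.exp (-(x - m) ^ 2) / 2) + m * E (x - m))
      (x * Real.exp (-(x - m) ^ 2)) x := by
  have h := (hasDerivAt_negexp_sub m x).add ((hasDerivAt_E_sub m x).const_mul m)
  exact h.congr_deriv (by ring)

lemma L3 : ∫ x in Ioi (0:ℝ), x * Real.exp (-(x - m) ^ 2)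
    = Real.exp (-m ^ 2) / 2 + m * (Real.sqrt π / 2 + E m) := by
  have htend : Tendsto (fun x : ℝ => -(Real.exp (-(x - m) ^ 2) / 2) + m * E (x - m)) atTop
      (𝓝 (-(0 / 2) + m * (Real.sqrt π / 2))) :=
    (((exp_sub_top m).div_const 2).neg).add ((E_sub_top m).const_mul m)
  have h := integral_Ioi_of_hasDerivAt_of_tendsto (a := (0:ℝ))
    (hasDerivAt_F m 0).continuousAt.continuousWithinAt
    (fun x _ => hasDerivAt_F m x)
    ((int_xexp_sub m).integrableOn)
    htend
  rw [h]
  simp [E_neg]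
  ring

lemma L4 : ∫ x in Iio (0:ℝ), x * Real.exp (-(x - m) ^ 2)
    = -(Real.exp (-m ^ 2) / 2) + m * (Real.sqrt π / 2 - E m) := by
  have htend : Tendsto (fun x : ℝ => -(Real.exp (-(x - m) ^ 2) / 2) + m * E (x - m)) atBot
      (𝓝 (-(0 / 2) + m * (-(Real.sqrt π / 2)))) :=
    (((exp_sub_bot m).div_const 2).neg).add ((E_sub_bot m).const_mul m)
  have h := integral_Iic_of_hasDerivAt_of_tendsto (a := (0:ℝ))
    (hasDerivAt_F m 0).continuousAt.continuousWithinAt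
    (fun x _ => hasDerivAt_F m x)
    ((int_xexp_sub m).integrableOn)
    htend
  rw [← integral_Iic_eq_integral_Iio, h]
  simp [E_neg]
  ring


lemma pdf_half (x : ℝ) :
    gaussianPDFReal m (1/2) x = (Real.sqrt π)⁻¹ * Real.exp (-(x - m) ^ 2) := by
  rw [gaussianPDFReal]
  norm_num
  have h2 : Real.sqrt 2 ≠ 0 := by positivity
  field_simp

lemma half_ne : (1/2 : ℝ≥0) ≠ 0 := by norm_num

lemma gauss_eq_density :
    gaussianReal m (1/2)
      = volume.withDensity (fun x => ((gaussianPDFReal m (1/2) x).toNNReal : ℝ≥0∞)) :=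
  gaussianReal_of_var_ne_zero m half_ne

lemma smul_eq (g : ℝ → ℝ) (x : ℝ) :
    (gaussianPDFReal m (1/2) x).toNNReal • g x
      = (Real.sqrt π)⁻¹ * Real.exp (-(x - m) ^ 2) * g x := by
  rw [NNReal.smul_def, Real.coe_toNNReal _ (gaussianPDFReal_nonneg m (1/2) x), pdf_half, smul_eq_mul]

lemma integral_gauss (g : ℝ → ℝ) :
    ∫ x, g x ∂(gaussianReal m (1/2))
      = ∫ x, (Real.sqrt π)⁻¹ * Real.exp (-(x - m) ^ 2) * g x := by
  rw [gauss_eq_density,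
    integral_withDensity_eq_integral_smul (measurable_gaussianPDFReal m (1/2)).real_toNNReal g]
  refine integral_congr_ae (ae_of_all _ fun x => ?_)
  dsimp only
  rw [smul_eq]

lemma integrable_gauss_iff (g : ℝ → ℝ) :
    Integrable g (gaussianReal m (1/2))
      ↔ Integrable (fun x => (Real.sqrt π)⁻¹ * Real.exp (-(x - m) ^ 2) * g x) volume := by
  rw [gauss_eq_density,
    integrable_withDensity_iff_integrable_smul (measurable_gaussianPDFReal m (1/2)).real_toNNReal]
  constructor <;> intro h <;> refine h.congr (ae_of_all _ fun x => ?_) <;> dsimp only <;>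
    rw [smul_eq]

-- volume-level integrals
lemma vol_sign : ∫ x : ℝ, Real.exp (-(x - m) ^ 2) * Real.sign x = 2 * E m := by
  have hmeas : AEStronglyMeasurable (fun x : ℝ => Real.exp (-(x - m) ^ 2) * Real.sign x) volume :=
    ((cont_exp_neg_sq.comp (continuous_id.sub continuous_const)).measurable.mul
      measurable_sign).aestronglyMeasurable
  have hint : Integrable fun x : ℝ => Real.exp (-(x - m) ^ 2) * Real.sign x := by
    refine (int_exp_sub m).mono hmeas (ae_of_all _ fun x => ?_)
    rw [Real.norm_eq_abs, Real.norm_eq_abs, abs_mul]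
    calc |Real.exp (-(x - m) ^ 2)| * |Real.sign x|
        ≤ |Real.exp (-(x - m) ^ 2)| * 1 := by
          exact mul_le_mul_of_nonneg_left (abs_sign_le x) (abs_nonneg _)
      _ = |Real.exp (-(x - m) ^ 2)| := mul_one _
  rw [← intervalIntegral.integral_Iio_add_Ici (b := (0:ℝ)) hint.integrableOn hint.integrableOn,
    integral_Ici_eq_integral_Ioi]
  have h1 : ∫ x in Iio (0:ℝ), Real.exp (-(x - m) ^ 2) * Real.sign x
      = ∫ x in Iio (0:ℝ), -Real.exp (-(x - m) ^ 2) := by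
    refine setIntegral_congr_fun measurableSet_Iio fun x hx => ?_
    rw [Real.sign_of_neg hx]; ring
  have h2 : ∫ x in Ioi (0:ℝ), Real.exp (-(x - m) ^ 2) * Real.sign x
      = ∫ x in Ioi (0:ℝ), Real.exp (-(x - m) ^ 2) := by
    refine setIntegral_congr_fun measurableSet_Ioi fun x hx => ?_
    rw [Real.sign_of_pos hx]; ring
  rw [h1, h2, integral_neg, L1, L2]
  ring

lemma vol_xsign : ∫ x : ℝ, Real.exp (-(x - m) ^ 2) * (x * Real.sign x)
    = Real.exp (-m ^ 2) + 2 * m * E m := by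
  have hmeas : AEStronglyMeasurable
      (fun x : ℝ => Real.exp (-(x - m) ^ 2) * (x * Real.sign x)) volume :=
    ((cont_exp_neg_sq.comp (continuous_id.sub continuous_const)).measurable.mul
      (measurable_id.mul measurable_sign)).aestronglyMeasurable
  have hint : Integrable fun x : ℝ => Real.exp (-(x - m) ^ 2) * (x * Real.sign x) := by
    refine (int_xexp_sub m).mono hmeas (ae_of_all _ fun x => ?_)
    rw [Real.norm_eq_abs, Real.norm_eq_abs, abs_mul, abs_mul]
    rw [show |x * Real.exp (-(x - m) ^ 2)| = |Real.exp (-(x-m)^2)| * |x| by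
      rw [abs_mul]; ring]
    exact mul_le_mul_of_nonneg_left
      (by simpa using mul_le_of_le_one_right (abs_nonneg x) (abs_sign_le x)) (abs_nonneg _)
  rw [← intervalIntegral.integral_Iio_add_Ici (b := (0:ℝ)) hint.integrableOn hint.integrableOn,
    integral_Ici_eq_integral_Ioi]
  have h1 : ∫ x in Iio (0:ℝ), Real.exp (-(x - m) ^ 2) * (x * Real.sign x)
      = ∫ x in Iio (0:ℝ), -(x * Real.exp (-(x - m) ^ 2)) := by
    refine setIntegral_congr_fun measurableSet_Iio fun x hx => ?_
    rw [Real.sign_of_neg hx]; ring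
  have h2 : ∫ x in Ioi (0:ℝ), Real.exp (-(x - m) ^ 2) * (x * Real.sign x)
      = ∫ x in Ioi (0:ℝ), x * Real.exp (-(x - m) ^ 2) := by
    refine setIntegral_congr_fun measurableSet_Ioi fun x hx => ?_
    rw [Real.sign_of_pos hx]; ring
  rw [h1, h2, integral_neg, L3, L4]
  ring

lemma vol_id : ∫ x : ℝ, Real.exp (-(x - m) ^ 2) * x = m * Real.sqrt π := by
  have hint : Integrable fun x : ℝ => Real.exp (-(x - m) ^ 2) * x := by
    refine (int_xexp_sub m).congr (ae_of_all _ fun x => ?_); ring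
  rw [← intervalIntegral.integral_Iio_add_Ici (b := (0:ℝ)) hint.integrableOn hint.integrableOn,
    integral_Ici_eq_integral_Ioi]
  have h1 : ∫ x in Iio (0:ℝ), Real.exp (-(x - m) ^ 2) * x
      = ∫ x in Iio (0:ℝ), x * Real.exp (-(x - m) ^ 2) := by
    refine setIntegral_congr_fun measurableSet_Iio fun x _ => ?_; ring
  have h2 : ∫ x in Ioi (0:ℝ), Real.exp (-(x - m) ^ 2) * x
      = ∫ x in Ioi (0:ℝ), x * Real.exp (-(x - m) ^ 2) := by
    refine setIntegral_congr_fun measurableSet_Ioi fun x _ => ?_; ring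
  rw [h1, h2, L3, L4]
  ring

lemma sqrt_pi_pos : 0 < Real.sqrt π := Real.sqrt_pos.mpr Real.pi_pos

-- gaussian-level integrals
lemma G_sign : ∫ x, Real.sign x ∂(gaussianReal m (1/2)) = erf m := by
  rw [integral_gauss]
  have : (fun x : ℝ => (Real.sqrt π)⁻¹ * Real.exp (-(x - m) ^ 2) * Real.sign x)
      = fun x => (Real.sqrt π)⁻¹ * (Real.exp (-(x - m) ^ 2) * Real.sign x) := by
    funext x; ring
  rw [this, integral_const_mul, vol_sign, erf_eq]
  field_simp

lemma G_xsign : ∫ x, x * Real.sign x ∂(gaussianReal m (1/2))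
    = (Real.sqrt π)⁻¹ * Real.exp (-m ^ 2) + m * erf m := by
  rw [integral_gauss]
  have : (fun x : ℝ => (Real.sqrt π)⁻¹ * Real.exp (-(x - m) ^ 2) * (x * Real.sign x))
      = fun x => (Real.sqrt π)⁻¹ * (Real.exp (-(x - m) ^ 2) * (x * Real.sign x)) := by
    funext x; ring
  rw [this, integral_const_mul, vol_xsign, erf_eq]
  have h := sqrt_pi_pos.ne'
  field_simp

lemma G_id : ∫ x, x ∂(gaussianReal m (1/2)) = m := by
  rw [integral_gauss]
  have : (fun x : ℝ => (Real.sqrt π)⁻¹ * Real.exp (-(x - m) ^ 2) * x)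
      = fun x => (Real.sqrt π)⁻¹ * (Real.exp (-(x - m) ^ 2) * x) := by
    funext x; ring
  rw [this, integral_const_mul, vol_id]
  field_simp

lemma I_sign : Integrable Real.sign (gaussianReal m (1/2)) := by
  rw [integrable_gauss_iff]
  have hmeas : AEStronglyMeasurable
      (fun x : ℝ => (Real.sqrt π)⁻¹ * Real.exp (-(x - m) ^ 2) * Real.sign x) volume :=
    (((cont_exp_neg_sq.comp (continuous_id.sub continuous_const)).measurable.const_mul
      _).mul measurable_sign).aestronglyMeasurable
  refine ((int_exp_sub m).const_mul ((Real.sqrt π)⁻¹)).mono hmeas (ae_of_all _ fun x => ?_)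
  rw [Real.norm_eq_abs, Real.norm_eq_abs, abs_mul]
  exact mul_le_of_le_one_right (abs_nonneg _) (abs_sign_le x)

lemma I_xsign : Integrable (fun x => x * Real.sign x) (gaussianReal m (1/2)) := by
  rw [integrable_gauss_iff]
  have hmeas : AEStronglyMeasurable
      (fun x : ℝ => (Real.sqrt π)⁻¹ * Real.exp (-(x - m) ^ 2) * (x * Real.sign x)) volume :=
    (((cont_exp_neg_sq.comp (continuous_id.sub continuous_const)).measurable.const_mul
      _).mul (measurable_id.mul measurable_sign)).aestronglyMeasurable
  have hI : Integrable fun x : ℝ => (Real.sqrt π)⁻¹ * (x * Real.exp (-(x - m) ^ 2)) :=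
    (int_xexp_sub m).const_mul _
  refine hI.mono hmeas (ae_of_all _ fun x => ?_)
  have heq : (Real.sqrt π)⁻¹ * Real.exp (-(x - m) ^ 2) * (x * Real.sign x)
      = (Real.sqrt π)⁻¹ * (x * Real.exp (-(x - m) ^ 2)) * Real.sign x := by ring
  rw [Real.norm_eq_abs, Real.norm_eq_abs, heq, abs_mul]
  exact mul_le_of_le_one_right (abs_nonneg _) (abs_sign_le x)

lemma I_id : Integrable (fun x : ℝ => x) (gaussianReal m (1/2)) := by
  rw [integrable_gauss_iff]
  refine ((int_xexp_sub m).const_mul ((Real.sqrt π)⁻¹)).congr (ae_of_all _ fun x => ?_)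
  ring

end CsgnAux


lemma integral_cofReal {α : Type*} [MeasurableSpace α] {μ : Measure α} {f : α → ℝ} :
    ∫ x, ((f x : ℝ) : ℂ) ∂μ = ((∫ x, f x ∂μ : ℝ) : ℂ) :=
  integral_ofReal

/-- Diagonal case of equations (68)–(70):
`E[z · conj(csgn z)] = (1/√π)(e^{−(Re μ)²} + e^{−(Im μ)²}) + Re μ·Φ(Re μ) + Im μ·Φ(Im μ)
  + i(Im μ·Φ(Re μ) − Re μ·Φ(Im μ))`. -/
theorem expectation_self_mul_conj_csgn (μ : ℂ) :
    ∫ z, z * (starRingEnd ℂ) (csgn z) ∂(complexGaussian μ) =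
      ((1 / Real.sqrt Real.pi * (Real.exp (-μ.re ^ 2) + Real.exp (-μ.im ^ 2)) +
          μ.re * erf μ.re + μ.im * erf μ.im : ℝ) : ℂ) +
        ((μ.im * erf μ.re - μ.re * erf μ.im : ℝ) : ℂ) * Complex.I := by
  have hφ : Measurable fun p : ℝ × ℝ => (p.1 : ℂ) + (p.2 : ℂ) * Complex.I :=
    (Complex.measurable_ofReal.comp measurable_fst).add
      ((Complex.measurable_ofReal.comp measurable_snd).mul_const _)
  have hcsgn : Measurable csgn := by
    unfold csgn
    exact (Complex.measurable_ofReal.comp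
        (CsgnAux.measurable_sign.comp Complex.measurable_re)).add
      ((Complex.measurable_ofReal.comp
        (CsgnAux.measurable_sign.comp Complex.measurable_im)).mul_const _)
  have hf : Measurable fun z : ℂ => z * (starRingEnd ℂ) (csgn z) := by
    apply measurable_id.mul
    exact Complex.continuous_conj.measurable.comp hcsgn
  rw [complexGaussian, integral_map hφ.aemeasurable hf.aestronglyMeasurable]
  have key : ∀ p : ℝ × ℝ,
      ((p.1 : ℂ) + (p.2 : ℂ) * Complex.I) *
          (starRingEnd ℂ) (csgn ((p.1 : ℂ) + (p.2 : ℂ) * Complex.I))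
        = ((p.1 * Real.sign p.1 + p.2 * Real.sign p.2 : ℝ) : ℂ)
          + ((Real.sign p.1 * p.2 - p.1 * Real.sign p.2 : ℝ) : ℂ) * Complex.I := by
    intro p
    have hre : ((p.1 : ℂ) + (p.2 : ℂ) * Complex.I).re = p.1 := by simp
    have him : ((p.1 : ℂ) + (p.2 : ℂ) * Complex.I).im = p.2 := by simp
    rw [csgn, hre, him]
    apply Complex.ext <;>
      simp [Complex.add_re, Complex.add_im, Complex.mul_re, Complex.mul_im] <;> ring
  simp_rw [key]
  have h1 : Integrable (fun p : ℝ × ℝ => p.1 * Real.sign p.1)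
      ((gaussianReal μ.re (1/2)).prod (gaussianReal μ.im (1/2))) := by
    simpa using (CsgnAux.I_xsign μ.re).mul_prod (integrable_const (1 : ℝ))
  have h2 : Integrable (fun p : ℝ × ℝ => p.2 * Real.sign p.2)
      ((gaussianReal μ.re (1/2)).prod (gaussianReal μ.im (1/2))) := by
    simpa using (integrable_const (1 : ℝ)).mul_prod (CsgnAux.I_xsign μ.im)
  have h3 : Integrable (fun p : ℝ × ℝ => Real.sign p.1 * p.2)
      ((gaussianReal μ.re (1/2)).prod (gaussianReal μ.im (1/2))) :=
    (CsgnAux.I_sign μ.re).mul_prod (CsgnAux.I_id μ.im)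
  have h4 : Integrable (fun p : ℝ × ℝ => p.1 * Real.sign p.2)
      ((gaussianReal μ.re (1/2)).prod (gaussianReal μ.im (1/2))) :=
    (CsgnAux.I_id μ.re).mul_prod (CsgnAux.I_sign μ.im)
  have hA : Integrable
      (fun p : ℝ × ℝ => ((p.1 * Real.sign p.1 + p.2 * Real.sign p.2 : ℝ) : ℂ))
      ((gaussianReal μ.re (1/2)).prod (gaussianReal μ.im (1/2))) := (h1.add h2).ofReal
  have hB : Integrable
      (fun p : ℝ × ℝ => ((Real.sign p.1 * p.2 - p.1 * Real.sign p.2 : ℝ) : ℂ) * Complex.I)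
      ((gaussianReal μ.re (1/2)).prod (gaussianReal μ.im (1/2))) :=
    ((h3.sub h4).ofReal).mul_const _
  rw [integral_add hA hB, integral_mul_const, integral_cofReal, integral_cofReal,
    integral_add h1 h2, integral_sub h3 h4]
  have e1 : ∫ p : ℝ × ℝ, p.1 * Real.sign p.1
      ∂((gaussianReal μ.re (1/2)).prod (gaussianReal μ.im (1/2)))
      = ∫ x, x * Real.sign x ∂(gaussianReal μ.re (1/2)) := by
    simpa using integral_prod_mul (μ := gaussianReal μ.re (1/2))
      (ν := gaussianReal μ.im (1/2)) (fun x => x * Real.sign x) (fun _ => (1 : ℝ))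
  have e2 : ∫ p : ℝ × ℝ, p.2 * Real.sign p.2
      ∂((gaussianReal μ.re (1/2)).prod (gaussianReal μ.im (1/2)))
      = ∫ y, y * Real.sign y ∂(gaussianReal μ.im (1/2)) := by
    simpa using integral_prod_mul (μ := gaussianReal μ.re (1/2))
      (ν := gaussianReal μ.im (1/2)) (fun _ => (1 : ℝ)) (fun y => y * Real.sign y)
  have e3 : ∫ p : ℝ × ℝ, Real.sign p.1 * p.2
      ∂((gaussianReal μ.re (1/2)).prod (gaussianReal μ.im (1/2)))
      = (∫ x, Real.sign x ∂(gaussianReal μ.re (1/2)))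
        * ∫ y, y ∂(gaussianReal μ.im (1/2)) :=
    integral_prod_mul (fun x => Real.sign x) (fun y => y)
  have e4 : ∫ p : ℝ × ℝ, p.1 * Real.sign p.2
      ∂((gaussianReal μ.re (1/2)).prod (gaussianReal μ.im (1/2)))
      = (∫ x, x ∂(gaussianReal μ.re (1/2)))
        * ∫ y, Real.sign y ∂(gaussianReal μ.im (1/2)) :=
    integral_prod_mul (fun x => x) (fun y => Real.sign y)
  rw [e1, e2, e3, e4, CsgnAux.G_xsign, CsgnAux.G_xsign, CsgnAux.G_sign, CsgnAux.G_sign,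
    CsgnAux.G_id, CsgnAux.G_id]
  push_cast
  ring
end
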